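/- arXiv:2006.02809 — 6 statements merged into one kernel-verified Lean document; each statement's English description precedes it below -/
import Mathlib

section
/- Let p > q > 1 and define g_μ(u) = -u^p + u^q - μu for u ≥ 0 and μ > 0, with primitive G_μ(u) = -u^{p+1}/(p+1) + u^{q+1}/(q+1) - μu²/2. Then for μ_* = 2(p+1)^{(q-1)/(p-q)} (q-1)^{(q-1)/(p-q)} (p-q) / ((q+1)^{(p-1)/(p-q)} (p-1)^{(p-1)/(p-q)}), the function G_{μ_*} is nonpositive on [0,∞) and has a zero at β_* = ((q-1)(p+1)/((q+1)(p-1)))^{1/(p-q)}, i.e. G_{μ_*}(β_*) = 0 and G_{μ_*}(u) ≤ 0 for all u ≥ 0. -/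
theorem stmt_0 (p q : ℝ) (hq : 1 < q) (hpq : q < p) :
    let μs : ℝ := 2 * (p + 1) ^ ((q - 1) / (p - q)) * (q - 1) ^ ((q - 1) / (p - q)) * (p - q) /
      ((q + 1) ^ ((p - 1) / (p - q)) * (p - 1) ^ ((p - 1) / (p - q)))
    let βs : ℝ := ((q - 1) * (p + 1) / ((q + 1) * (p - 1))) ^ (1 / (p - q))
    let G : ℝ → ℝ := fun u => -u ^ (p + 1) / (p + 1) + u ^ (q + 1) / (q + 1) - μs * u ^ 2 / 2
    G βs = 0 ∧ ∀ u : ℝ, 0 ≤ u → G u ≤ 0 := by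
  intro μs βs G
  have hpq1 : (0:ℝ) < p - q := by linarith
  have hq1 : (0:ℝ) < q - 1 := by linarith
  have hp1 : (0:ℝ) < p - 1 := by linarith
  have hq2 : (0:ℝ) < q + 1 := by linarith
  have hp2 : (0:ℝ) < p + 1 := by linarith
  obtain ⟨A, hA_def, hA⟩ : ∃ A : ℝ, A = (q - 1) * (p + 1) / ((q + 1) * (p - 1)) ∧ 0 < A :=
    ⟨_, rfl, by positivity⟩
  have hβdef : βs = A ^ (1 / (p - q)) := by rw [hA_def]
  have hβ : 0 < βs := by rw [hβdef]; exact Real.rpow_pos_of_pos hA _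
  have hβpq : βs ^ (p - q) = A := by
    rw [hβdef, ← Real.rpow_mul hA.le, one_div_mul_cancel hpq1.ne', Real.rpow_one]
  have hβq1 : βs ^ (q - 1) = A ^ ((q - 1) / (p - q)) := by
    rw [hβdef, ← Real.rpow_mul hA.le, one_div, inv_mul_eq_div]
  set T : ℝ := βs ^ (q - 1) with hT_def
  have hT : 0 < T := Real.rpow_pos_of_pos hβ _
  -- μs in terms of T
  have hμ : μs = 2 * (p - q) * T / ((q + 1) * (p - 1)) := by
    have hb : (p - 1) / (p - q) = (q - 1) / (p - q) + 1 := by field_simp; ring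
    have hμdef : μs = 2 * (p + 1) ^ ((q - 1) / (p - q)) * (q - 1) ^ ((q - 1) / (p - q)) * (p - q) /
        ((q + 1) ^ ((p - 1) / (p - q)) * (p - 1) ^ ((p - 1) / (p - q))) := rfl
    have hTA : T = (q - 1) ^ ((q - 1) / (p - q)) * (p + 1) ^ ((q - 1) / (p - q)) /
        ((q + 1) ^ ((q - 1) / (p - q)) * (p - 1) ^ ((q - 1) / (p - q))) := by
      rw [hβq1, hA_def, Real.div_rpow (by positivity) (by positivity),
        Real.mul_rpow hq1.le hp2.le, Real.mul_rpow hq2.le hp1.le]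
    have e1 : (q + 1) ^ ((p - 1) / (p - q)) = (q + 1) ^ ((q - 1) / (p - q)) * (q + 1) := by
      rw [hb, Real.rpow_add hq2, Real.rpow_one]
    have e2 : (p - 1) ^ ((p - 1) / (p - q)) = (p - 1) ^ ((q - 1) / (p - q)) * (p - 1) := by
      rw [hb, Real.rpow_add hp1, Real.rpow_one]
    have hX : (0:ℝ) < (p + 1) ^ ((q - 1) / (p - q)) := Real.rpow_pos_of_pos hp2 _
    have hY : (0:ℝ) < (q - 1) ^ ((q - 1) / (p - q)) := Real.rpow_pos_of_pos hq1 _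
    have hZ : (0:ℝ) < (q + 1) ^ ((q - 1) / (p - q)) := Real.rpow_pos_of_pos hq2 _
    have hW : (0:ℝ) < (p - 1) ^ ((q - 1) / (p - q)) := Real.rpow_pos_of_pos hp1 _
    rw [hμdef, hTA, e1, e2]
    field_simp
  have h2 : ∀ x : ℝ, 0 < x → x ^ (2:ℝ) = x ^ 2 := by
    intro x hx
    rw [show (2:ℝ) = ((2:ℕ):ℝ) by norm_num, Real.rpow_natCast]
  have hβQ : βs ^ (q + 1) = βs ^ 2 * T := by
    rw [show q + 1 = (2:ℝ) + (q - 1) by ring, Real.rpow_add hβ, h2 βs hβ, hT_def]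
  have hβP : βs ^ (p + 1) = βs ^ 2 * T * A := by
    rw [show p + 1 = (2:ℝ) + (q - 1) + (p - q) by ring, Real.rpow_add hβ, Real.rpow_add hβ,
      h2 βs hβ, hβpq, hT_def]
  constructor
  · show -βs ^ (p + 1) / (p + 1) + βs ^ (q + 1) / (q + 1) - μs * βs ^ 2 / 2 = 0
    rw [hβP, hβQ, hμ, hA_def]
    field_simp
    ring
  · intro u hu
    rcases eq_or_lt_of_le hu with h0 | h0
    · show -u ^ (p + 1) / (p + 1) + u ^ (q + 1) / (q + 1) - μs * u ^ 2 / 2 ≤ 0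
      rw [← h0, Real.zero_rpow hp2.ne', Real.zero_rpow hq2.ne']
      norm_num
    · set w1 : ℝ := (q - 1) / (p - 1) with hw1_def
      set w2 : ℝ := (p - q) / (p - 1) with hw2_def
      have hw1 : 0 ≤ w1 := by positivity
      have hw2 : 0 ≤ w2 := by positivity
      have hw : w1 + w2 = 1 := by rw [hw1_def, hw2_def]; field_simp; ring
      set a : ℝ := (p - 1) / ((q - 1) * (p + 1)) with ha_def
      set b : ℝ := T / (q + 1) with hb_def
      have haa : 0 < a := by positivity
      have hbb : 0 < b := by positivity
      have hup : (0:ℝ) < u ^ (p + 1) := Real.rpow_pos_of_pos h0 _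
      have hu2 : (0:ℝ) < u ^ 2 := by positivity
      have key := Real.geom_mean_le_arith_mean2_weighted hw1 hw2
        (mul_nonneg haa.le hup.le) (mul_nonneg hbb.le hu2.le) hw
      -- rewrite LHS
      have lhs1 : (a * u ^ (p + 1)) ^ w1 * (b * u ^ 2) ^ w2
          = (a ^ w1 * b ^ w2) * u ^ (q + 1) := by
        rw [Real.mul_rpow haa.le hup.le, Real.mul_rpow hbb.le hu2.le, ← h2 u h0]
        rw [← Real.rpow_mul h0.le, ← Real.rpow_mul h0.le]
        have : u ^ ((p + 1) * w1) * u ^ ((2:ℝ) * w2) = u ^ (q + 1) := by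
          rw [← Real.rpow_add h0]
          congr 1
          rw [hw1_def, hw2_def]
          field_simp
          ring
        calc a ^ w1 * u ^ ((p + 1) * w1) * (b ^ w2 * u ^ ((2:ℝ) * w2))
            = (a ^ w1 * b ^ w2) * (u ^ ((p + 1) * w1) * u ^ ((2:ℝ) * w2)) := by ring
          _ = (a ^ w1 * b ^ w2) * u ^ (q + 1) := by rw [this]
      have hconst : a ^ w1 * b ^ w2 = 1 / (q + 1) := by
        have ha' : a = ((q + 1) * A)⁻¹ := by rw [ha_def, hA_def]; field_simp
        have h1 : a ^ w1 = ((q + 1) ^ w1 * A ^ w1)⁻¹ := by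
          rw [ha', ← Real.mul_rpow hq2.le hA.le, Real.inv_rpow (by positivity)]
        have hTw : T ^ w2 = A ^ w1 := by
          rw [hβq1, ← Real.rpow_mul hA.le]
          congr 1
          rw [hw1_def, hw2_def]
          field_simp
        have h2' : b ^ w2 = A ^ w1 / (q + 1) ^ w2 := by
          rw [hb_def, Real.div_rpow hT.le hq2.le, hTw]
        have hAw : (0:ℝ) < A ^ w1 := Real.rpow_pos_of_pos hA _
        have hq1w : (0:ℝ) < (q + 1) ^ w1 := Real.rpow_pos_of_pos hq2 _
        have hq2w : (0:ℝ) < (q + 1) ^ w2 := Real.rpow_pos_of_pos hq2 _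
        have hmul : (q + 1) ^ w1 * (q + 1) ^ w2 = q + 1 := by
          rw [← Real.rpow_add hq2, hw, Real.rpow_one]
        have e : ((q + 1) ^ w1 * A ^ w1)⁻¹ * (A ^ w1 / (q + 1) ^ w2)
            = 1 / ((q + 1) ^ w1 * (q + 1) ^ w2) := by
          field_simp
        rw [h1, h2', e, hmul]
      have hw1a : w1 * a = 1 / (p + 1) := by
        rw [hw1_def, ha_def]; field_simp
      have hw2b : w2 * b = μs / 2 := by
        rw [hw2_def, hb_def, hμ]; field_simp
      have key2 : (1 / (q + 1)) * u ^ (q + 1)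
          ≤ (1 / (p + 1)) * u ^ (p + 1) + (μs / 2) * u ^ 2 := by
        calc (1 / (q + 1)) * u ^ (q + 1) = (a * u ^ (p + 1)) ^ w1 * (b * u ^ 2) ^ w2 := by
              rw [lhs1, hconst]
          _ ≤ w1 * (a * u ^ (p + 1)) + w2 * (b * u ^ 2) := key
          _ = (w1 * a) * u ^ (p + 1) + (w2 * b) * u ^ 2 := by ring
          _ = (1 / (p + 1)) * u ^ (p + 1) + (μs / 2) * u ^ 2 := by rw [hw1a, hw2b]
      show -u ^ (p + 1) / (p + 1) + u ^ (q + 1) / (q + 1) - μs * u ^ 2 / 2 ≤ 0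
      have e1 : u ^ (q + 1) / (q + 1) = (1 / (q + 1)) * u ^ (q + 1) := by ring
      have e2 : -u ^ (p + 1) / (p + 1) = -((1 / (p + 1)) * u ^ (p + 1)) := by ring
      have e3 : μs * u ^ 2 / 2 = (μs / 2) * u ^ 2 := by ring
      rw [e1, e2, e3]
      linarith [key2]
end

section
/- Let p > q > 1 and μ > 0, and suppose g_μ(u) = -u^p + u^q - μu has two roots 0 < α < β in (0,∞) with g_μ'(α) > 0 and g_μ'(β) ≤ 0. Then for every λ > 1 the function I_λ(x) = x g_μ'(x) - λ g_μ(x) satisfies I_λ(x) > 0 for all x ∈ (0, α]. -/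
theorem stmt_3 (p q μ α β : ℝ) (hq : 1 < q) (hpq : q < p) (hμ : 0 < μ)
    (hα : 0 < α) (hαβ : α < β)
    (hgα : -α ^ p + α ^ q - μ * α = 0)
    (hgβ : -β ^ p + β ^ q - μ * β = 0)
    (hdα : 0 < -p * α ^ (p - 1) + q * α ^ (q - 1) - μ)
    (hdβ : -p * β ^ (p - 1) + q * β ^ (q - 1) - μ ≤ 0) :
    ∀ lam : ℝ, 1 < lam → ∀ x : ℝ, 0 < x → x ≤ α →
      0 < x * (-p * x ^ (p - 1) + q * x ^ (q - 1) - μ)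
          - lam * (-x ^ p + x ^ q - μ * x) := by
  have hp1 : (1:ℝ) < p := hq.trans hpq
  -- rewrite α^p, α^q
  have hrecp : α ^ p = α ^ (p-1) * α := by
    rw [← Real.rpow_add_one hα.ne' (p-1)]; ring_nf
  have hrecq : α ^ q = α ^ (q-1) * α := by
    rw [← Real.rpow_add_one hα.ne' (q-1)]; ring_nf
  have hμ' : α ^ (q-1) - α ^ (p-1) = μ := by
    have h : (α ^ (q-1) - α ^ (p-1)) * α = μ * α := by
      rw [hrecp, hrecq] at hgα; linarith
    exact mul_right_cancel₀ hα.ne' h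
  -- key inequality at α
  have hkey : (p-1) * α ^ (p-1) < (q-1) * α ^ (q-1) := by nlinarith [hdα, hμ']
  have hαq1 : (0:ℝ) < α ^ (q-1) := Real.rpow_pos_of_pos hα _
  have hsplit : α ^ (p-1) = α ^ (p-q) * α ^ (q-1) := by
    rw [← Real.rpow_add hα]; ring_nf
  have hkey2 : (p-1) * α ^ (p-q) < q-1 := by
    have h : ((p-1) * α ^ (p-q)) * α ^ (q-1) < (q-1) * α ^ (q-1) := by
      rw [mul_assoc, ← hsplit]; exact hkey
    exact lt_of_mul_lt_mul_right h hαq1.le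
  -- key inequality at all 0 < y ≤ α
  have keyx : ∀ y : ℝ, 0 < y → y ≤ α → (p-1) * y ^ (p-1) < (q-1) * y ^ (q-1) := by
    intro y hy hyα
    have hyq1 : (0:ℝ) < y ^ (q-1) := Real.rpow_pos_of_pos hy _
    have hle : y ^ (p-q) ≤ α ^ (p-q) :=
      Real.rpow_le_rpow hy.le hyα (by linarith)
    have h2 : (p-1) * y ^ (p-q) < q - 1 := by nlinarith
    have hs : y ^ (p-1) = y ^ (p-q) * y ^ (q-1) := by
      rw [← Real.rpow_add hy]; ring_nf
    calc (p-1) * y ^ (p-1) = ((p-1) * y ^ (p-q)) * y ^ (q-1) := by rw [hs]; ring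
      _ < (q-1) * y ^ (q-1) := by
          exact mul_lt_mul_of_pos_right h2 hyq1
  -- g ≤ 0 on (0, α]
  have hg_neg : ∀ y : ℝ, 0 < y → y ≤ α → -y ^ p + y ^ q - μ * y ≤ 0 := by
    intro y hy hyα
    rcases eq_or_lt_of_le hyα with rfl | hlt
    · linarith [hgα]
    · -- f t = t^(q-1) - t^(p-1) strictly increasing on [y, α]
      set f : ℝ → ℝ := fun t => t ^ (q-1) - t ^ (p-1) with hf
      have hmono : StrictMonoOn f (Set.Icc y α) := by
        apply strictMonoOn_of_deriv_pos (convex_Icc y α)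
        · apply ContinuousOn.sub
          · exact fun t ht => (Real.continuousAt_rpow_const t _ (Or.inl (by linarith [ht.1] : t ≠ 0))).continuousWithinAt
          · exact fun t ht => (Real.continuousAt_rpow_const t _ (Or.inl (by linarith [ht.1] : t ≠ 0))).continuousWithinAt
        · intro t ht
          rw [interior_Icc] at ht
          have ht0 : 0 < t := hy.trans ht.1
          have hd : HasDerivAt f ((q-1) * t ^ (q-1-1) - (p-1) * t ^ (p-1-1)) t :=
            (Real.hasDerivAt_rpow_const (Or.inl ht0.ne')).sub
              (Real.hasDerivAt_rpow_const (Or.inl ht0.ne'))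
          rw [hd.deriv]
          have h1 := keyx t ht0 ht.2.le
          have hs1 : t ^ (p-1) = t ^ (p-1-1) * t := by
            rw [← Real.rpow_add_one ht0.ne']; ring_nf
          have hs2 : t ^ (q-1) = t ^ (q-1-1) * t := by
            rw [← Real.rpow_add_one ht0.ne']; ring_nf
          rw [hs1, hs2] at h1
          have := lt_of_mul_lt_mul_right (by nlinarith : ((p-1) * t ^ (p-1-1)) * t < ((q-1) * t ^ (q-1-1)) * t) ht0.le
          linarith
      have hflt : f y < f α :=
        hmono (Set.left_mem_Icc.mpr hlt.le) (Set.right_mem_Icc.mpr hlt.le) hlt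
      have hfy : y ^ (q-1) - y ^ (p-1) < μ := by
        simpa [hf, hμ'] using hflt
      have hyp : y ^ p = y ^ (p-1) * y := by
        rw [← Real.rpow_add_one hy.ne']; ring_nf
      have hyq : y ^ q = y ^ (q-1) * y := by
        rw [← Real.rpow_add_one hy.ne']; ring_nf
      rw [hyp, hyq]
      nlinarith
  -- conclusion
  intro lam hlam x hx hxα
  have hA := keyx x hx hxα
  have hB := hg_neg x hx hxα
  have hxp : x ^ p = x ^ (p-1) * x := by
    rw [← Real.rpow_add_one hx.ne']; ring_nf
  have hxq : x ^ q = x ^ (q-1) * x := by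
    rw [← Real.rpow_add_one hx.ne']; ring_nf
  rw [hxp, hxq] at hB ⊢
  nlinarith [mul_nonneg (by linarith : (0:ℝ) ≤ lam - 1)
      (by linarith : (0:ℝ) ≤ -(-(x ^ (p-1) * x) + x ^ (q-1) * x - μ * x)),
    mul_pos hx (sub_pos.mpr hA)]
end

section
/- Let d ≥ 2, g continuous with primitive G, and u a C² solution on (0,∞) of u'' + (d-1)u'/r + g(u) = 0 with u'(0) = 0, u(0) = y, such that u(r) → 0 and u'(r) → 0 as r → ∞ and u > 0 on [0,∞). Then G(y) = (d-1)∫₀^∞ u'(s)²/s ds; in particular G(y) > 0 unless u' ≡ 0. -/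
open MeasureTheory Set Filter
open scoped ENNReal

theorem stmt_6 (d : ℕ) (hd : 2 ≤ d) (g : ℝ → ℝ) (hg : Continuous g)
    (u u' u'' : ℝ → ℝ) (y : ℝ)
    (hu : ∀ r : ℝ, HasDerivAt u (u' r) r)
    (hu' : ∀ r : ℝ, HasDerivAt u' (u'' r) r)
    (hu'0 : u' 0 = 0) (hy : u 0 = y)
    (hODE : ∀ r : ℝ, 0 < r → u'' r + ((d : ℝ) - 1) * u' r / r + g (u r) = 0)
    (hpos : ∀ r : ℝ, 0 ≤ r → 0 < u r)
    (hlim : Filter.Tendsto u Filter.atTop (nhds 0))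
    (hlim' : Filter.Tendsto u' Filter.atTop (nhds 0))
    (hint : MeasureTheory.IntegrableOn (fun s => (u' s) ^ 2 / s) (Set.Ioi 0)) :
    (∫ s in (0 : ℝ)..y, g s) = ((d : ℝ) - 1) * ∫ s in Set.Ioi (0 : ℝ), (u' s) ^ 2 / s ∧
      ((∃ r : ℝ, 0 < r ∧ u' r ≠ 0) → 0 < ∫ s in (0 : ℝ)..y, g s) := by
  set G : ℝ → ℝ := fun x => ∫ s in (0 : ℝ)..x, g s with hG
  have hGd : ∀ x : ℝ, HasDerivAt G (g x) x := fun x =>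
    (hg.integral_hasStrictDerivAt 0 x).hasDerivAt
  have hu'c : Continuous u' := (Differentiable.continuous (fun x => (hu' x).differentiableAt))
  set F : ℝ → ℝ := fun r => (u' r) ^ 2 / 2 + G (u r) with hF
  have hFd : ∀ r : ℝ, HasDerivAt F (u' r * u'' r + g (u r) * u' r) r := by
    intro r
    have h1 : HasDerivAt (fun r => (u' r) ^ 2 / 2) (u' r * u'' r) r := by
      have := (((hu' r).mul (hu' r)).div_const 2)
      have e1 : (fun r => (u' r) ^ 2 / 2) = fun x => (u' * u') x / 2 := by
        ext x; simp only [Pi.mul_apply]; ring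
      have e2 : u' r * u'' r = (u'' r * u' r + u' r * u'' r) / 2 := by ring
      rw [e1, e2]; exact this
    have h2 : HasDerivAt (fun r => G (u r)) (g (u r) * u' r) r :=
      (hGd (u r)).comp r (hu r)
    exact h1.add h2
  have hFd' : ∀ r : ℝ, 0 < r → HasDerivAt F (-(((d : ℝ) - 1) * ((u' r) ^ 2 / r))) r := by
    intro r hr
    have h := hODE r hr
    have : u' r * u'' r + g (u r) * u' r = -(((d : ℝ) - 1) * ((u' r) ^ 2 / r)) := by
      have hgu : g (u r) = -(u'' r + ((d : ℝ) - 1) * u' r / r) := by linarith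
      rw [hgu]; field_simp; ring
    exact this ▸ hFd r
  -- interval integrability of the derivative on [a,b] ⊆ (0,∞)
  have hcts : ContinuousOn (fun s => (u' s) ^ 2 / s) (Ioi (0:ℝ)) := by
    apply ContinuousOn.div (hu'c.pow 2).continuousOn continuousOn_id
    intro x hx; exact ne_of_gt hx
  -- key identity: for a > 0, F a = (d-1) * ∫_{Ioi a} u'^2/s
  have key : ∀ a : ℝ, 0 < a → F a = ((d : ℝ) - 1) * ∫ s in Ioi a, (u' s) ^ 2 / s := by
    intro a ha
    have hJint : IntegrableOn (fun s => (u' s) ^ 2 / s) (Ioi a) := by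
      exact hint.mono_set (Ioi_subset_Ioi ha.le)
    have hFTC : ∀ b : ℝ, a ≤ b →
        F b - F a = ∫ s in a..b, -(((d : ℝ) - 1) * ((u' s) ^ 2 / s)) := by
      intro b hab
      refine (intervalIntegral.integral_eq_sub_of_hasDerivAt ?_ ?_).symm
      · intro x hx
        rw [uIcc_of_le hab] at hx
        exact hFd' x (lt_of_lt_of_le ha hx.1)
      · apply ContinuousOn.intervalIntegrable
        rw [uIcc_of_le hab]
        apply ContinuousOn.neg
        apply ContinuousOn.mul continuousOn_const
        exact hcts.mono fun x hx => lt_of_lt_of_le ha hx.1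
    have h1 : Tendsto F atTop (nhds 0) := by
      have hsq : Tendsto (fun b => (u' b) ^ 2 / 2) atTop (nhds 0) := by
        have := ((hlim'.pow 2).div_const 2)
        simpa using this
      have hGc : Tendsto (fun b => G (u b)) atTop (nhds (G 0)) :=
        ((hGd 0).continuousAt.tendsto).comp hlim
      have hG0 : G 0 = 0 := by simp [hG]
      rw [hG0] at hGc
      simpa using hsq.add hGc
    have h2 : Tendsto (fun b => F a - ((d : ℝ) - 1) * ∫ s in a..b, (u' s) ^ 2 / s)
        atTop (nhds (F a - ((d : ℝ) - 1) * ∫ s in Ioi a, (u' s) ^ 2 / s)) := by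
      exact tendsto_const_nhds.sub (tendsto_const_nhds.mul
        (intervalIntegral_tendsto_integral_Ioi a hJint tendsto_id))
    have heq : ∀ᶠ b in atTop, F b =
        F a - ((d : ℝ) - 1) * ∫ s in a..b, (u' s) ^ 2 / s := by
      filter_upwards [eventually_ge_atTop a] with b hb
      have := hFTC b hb
      rw [intervalIntegral.integral_neg] at this
      have hmul : (∫ s in a..b, ((d : ℝ) - 1) * ((u' s) ^ 2 / s)) =
          ((d : ℝ) - 1) * ∫ s in a..b, (u' s) ^ 2 / s := by
        rw [intervalIntegral.integral_const_mul]
      linarith [hmul ▸ this]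
    have := tendsto_nhds_unique (h2.congr' (heq.mono fun b hb => hb.symm)) h1
    linarith
  -- now send a → 0 along 1/(n+1)
  have hFc : ContinuousAt F 0 := (hFd 0).continuousAt
  have hseq : Tendsto (fun n : ℕ => (1 : ℝ) / (n + 1)) atTop (nhds 0) :=
    tendsto_one_div_add_atTop_nhds_zero_nat
  have hF0 : F 0 = ∫ s in (0 : ℝ)..y, g s := by
    simp [hF, hu'0, hy, hG]
  have hunion : (⋃ n : ℕ, Ioi ((1 : ℝ) / (n + 1))) = Ioi 0 := by
    ext x
    simp only [mem_iUnion, mem_Ioi]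
    constructor
    · rintro ⟨n, hn⟩
      exact lt_trans (by positivity) hn
    · intro hx
      obtain ⟨n, hn⟩ := exists_nat_one_div_lt hx
      exact ⟨n, hn⟩
  have hmono : Monotone (fun n : ℕ => Ioi ((1 : ℝ) / (n + 1))) := by
    intro m n hmn
    apply Ioi_subset_Ioi
    apply one_div_le_one_div_of_le (by positivity)
    have : (m : ℝ) ≤ (n : ℝ) := Nat.cast_le.mpr hmn
    linarith
  have htend : Tendsto (fun n : ℕ => ∫ s in Ioi ((1:ℝ)/(n+1)), (u' s) ^ 2 / s)
      atTop (nhds (∫ s in Ioi (0:ℝ), (u' s) ^ 2 / s)) := by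
    have := MeasureTheory.tendsto_setIntegral_of_monotone
      (fun n : ℕ => measurableSet_Ioi) hmono (by rwa [hunion])
    rwa [hunion] at this
  have hFa : Tendsto (fun n : ℕ => F ((1:ℝ)/(n+1))) atTop (nhds (F 0)) :=
    (hFc.tendsto).comp hseq
  have heqn : ∀ n : ℕ, F ((1:ℝ)/(n+1)) =
      ((d : ℝ) - 1) * ∫ s in Ioi ((1:ℝ)/(n+1)), (u' s) ^ 2 / s := by
    intro n; exact key _ (by positivity)
  have hmain : F 0 = ((d : ℝ) - 1) * ∫ s in Ioi (0:ℝ), (u' s) ^ 2 / s := by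
    refine tendsto_nhds_unique hFa ?_
    have := tendsto_const_nhds (x := ((d:ℝ)-1)) (f := atTop (α := ℕ)) |>.mul htend
    exact this.congr fun n => (heqn n).symm
  have hmain' : (∫ s in (0 : ℝ)..y, g s) =
      ((d : ℝ) - 1) * ∫ s in Ioi (0:ℝ), (u' s) ^ 2 / s := hF0 ▸ hmain
  refine ⟨hmain', ?_⟩
  rintro ⟨r, hr, hr'⟩
  rw [hmain']
  have hd1 : (0 : ℝ) < (d : ℝ) - 1 := by
    have : (2 : ℝ) ≤ (d : ℝ) := by exact_mod_cast hd
    linarith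
  apply mul_pos hd1
  have hnn : 0 ≤ᵐ[volume.restrict (Ioi (0:ℝ))] fun s => (u' s) ^ 2 / s := by
    filter_upwards [ae_restrict_mem measurableSet_Ioi] with x hx
    have hx0 : 0 < x := hx
    positivity
  rw [MeasureTheory.setIntegral_pos_iff_support_of_nonneg_ae hnn hint]
  have hopen : IsOpen {s : ℝ | u' s ≠ 0} := isOpen_ne.preimage hu'c
  obtain ⟨ε, hε, hball⟩ := Metric.isOpen_iff.1 hopen r hr'
  set δ := min ε r with hδ
  have hδpos : 0 < δ := lt_min hε hr
  have hsub : Ioo r (r + δ) ⊆ Function.support (fun s => (u' s) ^ 2 / s) ∩ Ioi 0 := by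
    intro x hx
    have hx0 : 0 < x := lt_trans hr hx.1
    have hxb : x ∈ Metric.ball r ε := by
      rw [Metric.mem_ball, Real.dist_eq, abs_lt]
      constructor <;> [linarith [hx.1]; linarith [hx.2, min_le_left ε r]]
    have hne : u' x ≠ 0 := hball hxb
    refine ⟨?_, hx0⟩
    simp only [Function.mem_support]
    positivity
  calc (0 : ℝ≥0∞) < volume (Ioo r (r + δ)) := by
        rw [Real.volume_Ioo]; simp; linarith
    _ ≤ _ := measure_mono hsub
end

section
/- Let d ≥ 2, g : ℝ → ℝ continuous with G(η) = ∫₀^η g(s)ds, and α > 0 with g < 0 on (0, α). If u solves u'' + (d-1)u'/r + g(u) = 0 on (0,∞) with u'(0) = 0 and 0 < u(0) ≤ α, then u(r) > 0 for all r ≥ 0. -/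
theorem stmt_7 (d : ℕ) (hd : 2 ≤ d) (g : ℝ → ℝ) (hg : Continuous g) (α : ℝ) (hα : 0 < α)
    (hgneg : ∀ s : ℝ, 0 < s → s < α → g s < 0)
    (u u' u'' : ℝ → ℝ)
    (hu : ∀ r : ℝ, HasDerivAt u (u' r) r)
    (hu' : ∀ r : ℝ, HasDerivAt u' (u'' r) r)
    (hu'0 : u' 0 = 0)
    (hODE : ∀ r : ℝ, 0 < r → u'' r + ((d : ℝ) - 1) * u' r / r + g (u r) = 0)
    (h0 : 0 < u 0) (h0α : u 0 ≤ α) :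
    ∀ r : ℝ, 0 ≤ r → 0 < u r := by
  set G : ℝ → ℝ := fun y => ∫ s in (0:ℝ)..y, g s with hGdef
  have hGd : ∀ x : ℝ, HasDerivAt G (g x) x := fun x =>
    intervalIntegral.integral_hasDerivAt_right (hg.intervalIntegrable 0 x)
      (hg.stronglyMeasurableAtFilter _ _) hg.continuousAt
  set H : ℝ → ℝ := fun r => (u' r)^2/2 + G (u r) with hHdef
  have hHd : ∀ r : ℝ, HasDerivAt H (u' r * u'' r + g (u r) * u' r) r := by
    intro r
    have h1 : HasDerivAt (fun r => (u' r)^2/2) (u' r * u'' r) r := by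
      have := ((hu' r).fun_pow 2).div_const 2
      exact this.congr_deriv (by ring)
    have h2 : HasDerivAt (fun r => G (u r)) (g (u r) * u' r) r :=
      (hGd (u r)).comp r (hu r)
    exact h1.add h2
  -- H is nonincreasing on [0, ∞)
  have hkey : ∀ r₀ : ℝ, 0 ≤ r₀ → H r₀ ≤ H 0 := by
    intro r₀ hr₀
    rcases eq_or_lt_of_le hr₀ with h | h
    · rw [← h]
    have hA : AntitoneOn H (Set.Icc 0 r₀) := by
      apply antitoneOn_of_deriv_nonpos (convex_Icc 0 r₀)
      · exact fun x _ => (hHd x).continuousAt.continuousWithinAt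
      · intro x hx
        exact ((hHd x).differentiableAt).differentiableWithinAt
      · intro x hx
        rw [interior_Icc] at hx
        obtain ⟨hx0, _⟩ := hx
        rw [(hHd x).deriv]
        have hode := hODE x hx0
        have hu'' : u'' x = -(((d : ℝ) - 1) * u' x / x + g (u x)) := by linarith
        have : u' x * u'' x + g (u x) * u' x = -(((d : ℝ) - 1) * (u' x)^2 / x) := by
          rw [hu'']; field_simp; ring
        rw [this]
        have hd1 : (0:ℝ) ≤ (d : ℝ) - 1 := by
          have : (2:ℝ) ≤ (d : ℝ) := by exact_mod_cast hd
          linarith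
        have : 0 ≤ ((d : ℝ) - 1) * (u' x)^2 / x :=
          div_nonneg (mul_nonneg hd1 (sq_nonneg _)) hx0.le
        linarith
    exact hA (Set.left_mem_Icc.2 hr₀) (Set.right_mem_Icc.2 hr₀) hr₀
  -- H 0 < 0
  have hG0 : G (u 0) < 0 := by
    have : 0 < ∫ s in (0:ℝ)..(u 0), (fun s => -g s) s := by
      apply intervalIntegral.intervalIntegral_pos_of_pos_on
      · exact ((hg.neg).intervalIntegrable 0 (u 0))
      · intro x hx
        have := hgneg x hx.1 (lt_of_lt_of_le hx.2 h0α)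
        linarith
      · exact h0
    have hneg : (∫ s in (0:ℝ)..(u 0), -g s) = - G (u 0) := by
      simp [hGdef, intervalIntegral.integral_neg]
    rw [hneg] at this
    linarith
  have hH0 : H 0 < 0 := by
    simp only [hHdef, hu'0]
    norm_num
    exact hG0
  -- conclude by contradiction using IVT
  intro r hr
  by_contra hle
  push_neg at hle
  have hcont : ContinuousOn u (Set.Icc 0 r) := fun x _ => (hu x).continuousAt.continuousWithinAt
  have : (0:ℝ) ∈ Set.Icc (u r) (u 0) := ⟨hle, h0.le⟩
  obtain ⟨r₀, hr₀mem, hr₀⟩ := intermediate_value_Icc' hr hcont this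
  have hHr₀ : 0 ≤ H r₀ := by
    simp only [hHdef, hr₀]
    have : G 0 = 0 := intervalIntegral.integral_same
    rw [this]
    positivity
  have := hkey r₀ hr₀mem.1
  linarith
end

section
/- Let d ≥ 3 and u ∈ H¹(ℝᵈ) a solution of -Δu = g(u) (in the distributional sense) satisfying the Pohozaev identity ((d-2)/(2d)) ∫ |∇u|² = ∫ G(u). If u is a minimizer of the energy E(u) = (1/2)∫|∇u|² + (1/(p+1))∫|u|^{p+1} - (1/(q+1))∫|u|^{q+1} on the sphere ∫|u|² = λ > 0 with Lagrange multiplier μ (so that g = g_μ with g_μ(u) = -u^p + u^q - μu), then μ = (2/λ)( -I(λ) + (1/d)∫|∇u|² ), where I(λ) = E(u). In particular, if I(λ) ≤ 0 and u is not identically zero, then μ > 0. -/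
theorem stmt_9 (d : ℕ) (hd : 3 ≤ d) (p q lam mu : ℝ) (hq : 1 < q) (hpq : q < p)
    (hlam : 0 < lam)
    (u : EuclideanSpace ℝ (Fin d) → ℝ) (hu : ContDiff ℝ 1 u)
    (hint1 : MeasureTheory.Integrable (fun x => ‖fderiv ℝ u x‖ ^ 2))
    (hint2 : MeasureTheory.Integrable (fun x => (u x) ^ 2))
    (T A B Ilam : ℝ)
    (hT : T = ∫ x, ‖fderiv ℝ u x‖ ^ 2)
    (hA : A = ∫ x, |u x| ^ (p + 1))
    (hB : B = ∫ x, |u x| ^ (q + 1))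
    (hM : (∫ x, (u x) ^ 2) = lam)
    (hPoh : ((d : ℝ) - 2) / (2 * d) * T = -(A / (p + 1)) + B / (q + 1) - mu * lam / 2)
    (hE : Ilam = T / 2 + A / (p + 1) - B / (q + 1)) :
    mu = (2 / lam) * (-Ilam + T / d) ∧
      (Ilam ≤ 0 → (∃ x, u x ≠ 0) → 0 < mu) := by
  have hd3 : (3:ℝ) ≤ (d:ℝ) := by exact_mod_cast hd
  have hdpos : (0:ℝ) < (d:ℝ) := by linarith
  have hd0 : (d:ℝ) ≠ 0 := ne_of_gt hdpos
  have hp1 : (p:ℝ) + 1 ≠ 0 := by nlinarith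
  have hq1 : (q:ℝ) + 1 ≠ 0 := by nlinarith
  have hlam0 : lam ≠ 0 := ne_of_gt hlam
  have hp0 : (0:ℝ) < p + 1 := by linarith
  have hq0 : (0:ℝ) < q + 1 := by linarith
  have key2 : mu * lam * d = -(2 * Ilam * d) + 2 * T := by
    field_simp at hPoh hE
    apply mul_right_cancel₀ (b := (p+1)*(q+1)*2) (by positivity)
    linear_combination 2 * hPoh + 2 * (d:ℝ) * hE
  have hmu : mu = (2 / lam) * (-Ilam + T / d) := by
    field_simp
    linear_combination key2
  refine ⟨hmu, fun hI ⟨x₀, hx⟩ => ?_⟩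
  -- show T > 0
  have hTnn : 0 ≤ T := by
    rw [hT]; positivity
  have hTpos : 0 < T := by
    rcases lt_or_eq_of_le hTnn with h | h
    · exact h
    · exfalso
      -- T = 0 forces fderiv u = 0 everywhere
      have hcont : Continuous fun x => ‖fderiv ℝ u x‖ ^ 2 :=
        (hu.continuous_fderiv (by norm_num)).norm.pow 2
      have hae : (fun x => ‖fderiv ℝ u x‖ ^ 2) =ᵐ[MeasureTheory.volume] 0 := by
        rw [← MeasureTheory.integral_eq_zero_iff_of_nonneg (fun x => by positivity) hint1]
        exact h.symm ▸ hT.symm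
      have hzero : (fun x => ‖fderiv ℝ u x‖ ^ 2) = 0 :=
        hcont.ae_eq_iff_eq MeasureTheory.volume continuous_const |>.mp hae
      have hf0 : ∀ x, fderiv ℝ u x = 0 := by
        intro x
        have := congrFun hzero x
        simp only [Pi.zero_apply, pow_eq_zero_iff, norm_eq_zero] at this
        simpa using this
      have hconst : ∀ x y, u x = u y := fun x y =>
        is_const_of_fderiv_eq_zero (hu.differentiable (by norm_num)) hf0 x y
      have heq : (fun x => (u x) ^ 2) = fun _ => (u x₀) ^ 2 := by
        funext y; rw [hconst y x₀]
      rw [heq] at hint2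
      rw [MeasureTheory.integrable_const_iff] at hint2
      rcases hint2 with h2 | h2
      · exact hx (pow_eq_zero_iff (n := 2) (by norm_num) |>.mp h2)
      · haveI : Nontrivial (EuclideanSpace ℝ (Fin d)) := by
          have : Nonempty (Fin d) := ⟨⟨0, by omega⟩⟩
          infer_instance
        replace h2 := h2.measure_univ_lt_top
        rw [MeasureTheory.measure_univ_of_isAddLeftInvariant] at h2
        exact (lt_irrefl _) h2
  have : 0 < -Ilam + T / d := by
    have : 0 < T / d := div_pos hTpos hdpos
    linarith
  rw [hmu]
  exact mul_pos (div_pos two_pos hlam) this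
end

section
/- Let J : (0,∞) → ℝ be concave, non-decreasing and non-positive, and define I(λ) = λ J(λ^{-2/d}) for λ > 0, with d ≥ 2 an integer. Then I is concave on (0,∞). -/
theorem stmt_12 (d : ℕ) (hd : 2 ≤ d) (J : ℝ → ℝ)
    (hconc : ConcaveOn ℝ (Set.Ioi 0) J)
    (hmono : MonotoneOn J (Set.Ioi 0))
    (hnonpos : ∀ x ∈ Set.Ioi (0 : ℝ), J x ≤ 0) :
    ConcaveOn ℝ (Set.Ioi 0) (fun lam : ℝ => lam * J (lam ^ (-(2 / (d : ℝ))))) := by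
  have hd' : (2 : ℝ) ≤ (d : ℝ) := by exact_mod_cast hd
  have hd0 : (0 : ℝ) < d := by linarith
  set p : ℝ := 2 / (d : ℝ) with hpdef
  have hp0 : 0 < p := by positivity
  have hp1 : p ≤ 1 := by rw [hpdef, div_le_one hd0]; linarith
  refine ⟨convex_Ioi 0, fun a ha b hb t s ht hs hts => ?_⟩
  simp only [smul_eq_mul]
  have ha' : (0 : ℝ) < a := ha
  have hb' : (0 : ℝ) < b := hb
  set c : ℝ := t * a + s * b with hc
  have hc0 : 0 < c := by
    have h1 : t * min a b ≤ t * a := mul_le_mul_of_nonneg_left (min_le_left a b) ht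
    have h2 : s * min a b ≤ s * b := mul_le_mul_of_nonneg_left (min_le_right a b) hs
    have hm : 0 < min a b := lt_min ha' hb'
    nlinarith
  set x : ℝ := a ^ (-p) with hx
  set y : ℝ := b ^ (-p) with hy
  have hx0 : 0 < x := Real.rpow_pos_of_pos ha' _
  have hy0 : 0 < y := Real.rpow_pos_of_pos hb' _
  set t' : ℝ := t * a / c with ht'
  set s' : ℝ := s * b / c with hs'
  have ht'0 : 0 ≤ t' := by positivity
  have hs'0 : 0 ≤ s' := by positivity
  have hsum : t' + s' = 1 := by
    rw [ht', hs', ← add_div, div_eq_one_iff_eq hc0.ne']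
  -- concavity of J
  have hJ : t' * J x + s' * J y ≤ J (t' * x + s' * y) := by
    have := hconc.2 (Set.mem_Ioi.mpr hx0) (Set.mem_Ioi.mpr hy0) ht'0 hs'0 hsum
    simpa using this
  -- the convex combination is positive
  have hz0 : 0 < t' * x + s' * y := by
    have h1 : t' * min x y ≤ t' * x := mul_le_mul_of_nonneg_left (min_le_left x y) ht'0
    have h2 : s' * min x y ≤ s' * y := mul_le_mul_of_nonneg_left (min_le_right x y) hs'0
    have hm : 0 < min x y := lt_min hx0 hy0
    nlinarith
  -- rpow concavity with exponent 1 - p ∈ [0,1]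
  have hq : t * a ^ (1 - p) + s * b ^ (1 - p) ≤ c ^ (1 - p) := by
    have := (Real.concaveOn_rpow (p := 1 - p) (by linarith) (by linarith)).2
      (Set.mem_Ici.mpr ha'.le) (Set.mem_Ici.mpr hb'.le) ht hs hts
    simpa using this
  have hax : a * x = a ^ (1 - p) := by
    rw [hx, show (1 : ℝ) - p = 1 + (-p) by ring, Real.rpow_add ha', Real.rpow_one]
  have hbx : b * y = b ^ (1 - p) := by
    rw [hy, show (1 : ℝ) - p = 1 + (-p) by ring, Real.rpow_add hb', Real.rpow_one]
  have hcx : c * c ^ (-p) = c ^ (1 - p) := by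
    rw [show (1 : ℝ) - p = 1 + (-p) by ring, Real.rpow_add hc0, Real.rpow_one]
  -- the key monotonicity step
  have hle : t' * x + s' * y ≤ c ^ (-p) := by
    rw [ht', hs']
    rw [div_mul_eq_mul_div, div_mul_eq_mul_div, ← add_div,
      div_le_iff₀ hc0]
    calc t * a * x + s * b * y = t * (a * x) + s * (b * y) := by ring
      _ ≤ c ^ (1 - p) := by rw [hax, hbx]; exact hq
      _ = c ^ (-p) * c := by rw [← hcx]; ring
  have hJle : J (t' * x + s' * y) ≤ J (c ^ (-p)) :=
    hmono (Set.mem_Ioi.mpr hz0) (Set.mem_Ioi.mpr (Real.rpow_pos_of_pos hc0 _)) hle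
  -- put it together
  have key : c * (t' * J x + s' * J y) ≤ c * J (c ^ (-p)) := by
    have h1 : c * (t' * J x + s' * J y) ≤ c * J (t' * x + s' * y) :=
      mul_le_mul_of_nonneg_left hJ hc0.le
    have h2 : c * J (t' * x + s' * y) ≤ c * J (c ^ (-p)) :=
      mul_le_mul_of_nonneg_left hJle hc0.le
    linarith
  have hexp : c * (t' * J x + s' * J y) = t * (a * J x) + s * (b * J y) := by
    rw [ht', hs']; field_simp
  calc t * (a * J (a ^ (-p))) + s * (b * J (b ^ (-p)))
      = c * (t' * J x + s' * J y) := by rw [hexp]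
    _ ≤ c * J (c ^ (-p)) := key
    _ = (t * a + s * b) * J ((t * a + s * b) ^ (-p)) := by rw [← hc]
end
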